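/- arXiv:0807.2332 — 7 statements merged into one kernel-verified Lean document; each statement's English description precedes it below -/
import Mathlib

section
/- An odd composite number n coprime to a is overpseudoprime to base a (i.e. n = r_a(n)·h_a(n) + 1) if and only if every divisor d > 1 of n satisfies h_a(d) = h_a(n), where h_a denotes multiplicative order of a. -/
/-!
Multiplication by `a` modulo `n` permutes `{1, …, n - 1}`, and its cycles are the cyclotomic
cosets. The cycle through `x` has length `ord_d(a)` with `d = n / gcd(n, x)`, a divisor of
`h = ord_n(a)`; summing the cycle lengths, `n - 1 = r · h` holds exactly when every cycle has the
full length `h`. As `x` runs over `1, …, n - 1`, `n / gcd(n, x)` runs over the divisors `d > 1`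
of `n`.
-/

open Function

namespace Function

variable {α : Type*} {f : α → α} {x y : α}

theorem range_iterate_eq_of_mem (hx : x ∈ periodicPts f) (hy : y ∈ Set.range (f^[·] x)) :
    Set.range (f^[·] y) = Set.range (f^[·] x) := by
  obtain ⟨k, rfl⟩ := hy
  have hP : k ≤ minimalPeriod f x * k :=
    Nat.le_mul_of_pos_left k (minimalPeriod_pos_of_mem_periodicPts hx)
  ext z
  constructor
  · rintro ⟨m, rfl⟩
    exact ⟨m + k, iterate_add_apply f m k x⟩
  · rintro ⟨m, rfl⟩
    -- with `P` the minimal period, `f^[(P - 1) * k] y = f^[P * k] x = x`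
    refine ⟨m + (minimalPeriod f x - 1) * k, ?_⟩
    have hk : m + (minimalPeriod f x - 1) * k + k = m + minimalPeriod f x * k := by
      rw [Nat.sub_one_mul]; omega
    beta_reduce
    rw [← iterate_add_apply, hk, ← iterate_mod_minimalPeriod_eq, Nat.add_mul_mod_self_left,
      iterate_mod_minimalPeriod_eq]

theorem ncard_range_iterate (hx : x ∈ periodicPts f) :
    (Set.range (f^[·] x)).ncard = minimalPeriod f x := by
  have hrange : Set.range (f^[·] x) = (f^[·] x) '' Finset.range (minimalPeriod f x) := by
    ext y
    constructor
    · rintro ⟨k, rfl⟩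
      exact ⟨k % _, Finset.mem_range.2 (Nat.mod_lt _ (minimalPeriod_pos_of_mem_periodicPts hx)),
        iterate_mod_minimalPeriod_eq⟩
    · rintro ⟨k, -, rfl⟩
      exact ⟨k, rfl⟩
  rw [hrange, Finset.coe_range, iterate_injOn_Iio_minimalPeriod.ncard_image, ← Finset.coe_range,
    Set.ncard_coe_finset, Finset.card_range]

theorem card_eq_ncard_orbits_mul_iff {s : Finset α} (hs : Set.MapsTo f s s) {h : ℕ} (hh : 0 < h)
    (hper : ∀ x ∈ s, IsPeriodicPt f h x) :
    s.card = ((fun x => Set.range (f^[·] x)) '' s).ncard * h ↔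
      ∀ x ∈ s, minimalPeriod f x = h := by
  classical
  set O : α → Set α := fun x => Set.range (f^[·] x)
  have hfiber : ∀ x ∈ s, {y ∈ s | O y = O x}.card = minimalPeriod f x := by
    intro x hx
    rw [← ncard_range_iterate (mk_mem_periodicPts hh (hper x hx)), ← Set.ncard_coe_finset]
    congr 1
    ext y
    simp only [Finset.coe_filter, Set.mem_ofPred_eq]
    refine ⟨fun ⟨_, hy⟩ => ?_, fun hy => ⟨?_, ?_⟩⟩
    · change y ∈ O x
      exact hy ▸ ⟨0, rfl⟩
    · obtain ⟨k, rfl⟩ := hy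
      exact hs.iterate k hx
    · exact range_iterate_eq_of_mem (mk_mem_periodicPts hh (hper x hx)) hy
  have hle : ∀ S ∈ s.image O, {y ∈ s | O y = S}.card ≤ h := Finset.forall_mem_image.2
    fun x hx => hfiber x hx ▸ Nat.le_of_dvd hh (hper x hx).minimalPeriod_dvd
  rw [← Finset.coe_image, Set.ncard_coe_finset, Finset.card_eq_sum_card_image O s, ← smul_eq_mul,
    ← Finset.sum_const, Finset.sum_eq_sum_iff_of_le hle, Finset.forall_mem_image]
  exact forall₂_congr fun x hx => by rw [hfiber x hx]

end Function

namespace Nat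

theorem modEq_mul_right_iff_modEq_div_gcd {m a b c : ℕ} (hm : 0 < m) :
    a * c ≡ b * c [MOD m] ↔ a ≡ b [MOD m / m.gcd c] := by
  refine ⟨ModEq.cancel_right_div_gcd hm, fun h => (h.mul_right' c).of_dvd ?_⟩
  calc m = m / m.gcd c * m.gcd c := (Nat.div_mul_cancel (gcd_dvd_left m c)).symm
    _ ∣ m / m.gcd c * c := Nat.mul_dvd_mul_left _ (gcd_dvd_right m c)

theorem forall_div_gcd_iff {n : ℕ} (hn : 0 < n) {P : ℕ → Prop} :
    (∀ x ∈ Finset.Ioo 0 n, P (n / n.gcd x)) ↔ ∀ d, d ∣ n → 1 < d → P d := by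
  refine ⟨fun h d hd hd1 => ?_, fun h x hx => h _ (div_dvd_of_dvd (gcd_dvd_left n x)) ?_⟩
  · have hx : n / d ∈ Finset.Ioo 0 n :=
      Finset.mem_Ioo.2 ⟨Nat.div_pos (le_of_dvd hn hd) (by omega), Nat.div_lt_self hn hd1⟩
    simpa only [gcd_eq_right (div_dvd_of_dvd hd), Nat.div_div_self hd hn.ne'] using h _ hx
  · rw [Finset.mem_Ioo] at hx
    rw [Nat.lt_div_iff_mul_lt' (gcd_dvd_left n x), mul_one]
    exact (le_of_dvd hx.1 (gcd_dvd_right n x)).trans_lt hx.2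

theorem iterate_mul_mod {a n x : ℕ} (hx : x < n) (k : ℕ) :
    (a * · % n)^[k] x = a ^ k * x % n := by
  induction k with
  | zero => simp [Nat.mod_eq_of_lt hx]
  | succ k ih => rw [iterate_succ_apply', ih, Nat.mul_mod_mod, ← mul_assoc, ← pow_succ']

theorem minimalPeriod_mul_mod {a n x : ℕ} (hx : x < n) :
    minimalPeriod (a * · % n) x = orderOf (a : ZMod (n / n.gcd x)) := by
  refine Nat.dvd_right_iff_eq.1 fun t => ?_
  rw [← isPeriodicPt_iff_minimalPeriod_dvd, orderOf_dvd_iff_pow_eq_one, ← Nat.cast_pow,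
    ← Nat.cast_one, ZMod.natCast_eq_natCast_iff, ← modEq_mul_right_iff_modEq_div_gcd (by omega),
    IsPeriodicPt, IsFixedPt, iterate_mul_mod hx, one_mul, ModEq, Nat.mod_eq_of_lt hx]

theorem mapsTo_mul_mod {a n : ℕ} (hcop : a.Coprime n) :
    Set.MapsTo (a * · % n) (Finset.Ioo 0 n : Set ℕ) (Finset.Ioo 0 n : Set ℕ) := by
  intro x hx
  simp only [Finset.coe_Ioo, Set.mem_Ioo] at hx ⊢
  refine ⟨Nat.pos_of_ne_zero fun h0 => ?_, Nat.mod_lt _ (by omega)⟩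
  have hnx : n ∣ x := hcop.symm.dvd_of_dvd_mul_left (Nat.dvd_of_mod_eq_zero h0)
  exact absurd (Nat.le_of_dvd hx.1 hnx) (by omega)

theorem orderOf_natCast_pos {a n : ℕ} (hn : 0 < n) (hcop : a.Coprime n) :
    0 < orderOf (a : ZMod n) := by
  refine orderOf_pos_iff.2 (isOfFinOrder_iff_pow_eq_one.2 ⟨n.totient, totient_pos.2 hn, ?_⟩)
  rw [← Nat.cast_pow, ← Nat.cast_one, ZMod.natCast_eq_natCast_iff]
  exact ModEq.pow_totient hcop

end Nat

theorem overpseudoprime_iff_general (a n : ℕ) (hn : 1 < n) (hcop : Nat.Coprime a n) (r : ℕ)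
    (hr : r = Set.ncard {S : Set ℕ | ∃ x, 0 < x ∧ x < n ∧
        S = Set.range (fun k : ℕ => a ^ k * x % n)}) :
    n = r * orderOf (a : ZMod n) + 1 ↔
      ∀ d, d ∣ n → 1 < d → orderOf (a : ZMod d) = orderOf (a : ZMod n) := by
  set h := orderOf (a : ZMod n)
  set f : ℕ → ℕ := (a * · % n)
  have hr' : r = ((fun x => Set.range (f^[·] x)) '' (Finset.Ioo 0 n : Set ℕ)).ncard := by
    rw [hr, Finset.coe_Ioo]
    congr 1
    ext S
    simp only [Set.mem_ofPred_eq, Set.mem_image, Set.mem_Ioo, f]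
    constructor
    · rintro ⟨x, hx0, hxn, rfl⟩
      exact ⟨x, ⟨hx0, hxn⟩, by simp only [Nat.iterate_mul_mod hxn]⟩
    · rintro ⟨x, ⟨hx0, hxn⟩, rfl⟩
      exact ⟨x, hx0, hxn, by simp only [Nat.iterate_mul_mod hxn]⟩
  have hper : ∀ x ∈ Finset.Ioo 0 n, IsPeriodicPt f h x := fun x hx => by
    rw [isPeriodicPt_iff_minimalPeriod_dvd, Nat.minimalPeriod_mul_mod (Finset.mem_Ioo.1 hx).2]
    simpa using orderOf_map_dvd
      (ZMod.castHom (Nat.div_dvd_of_dvd (Nat.gcd_dvd_left n x)) _).toMonoidHom (a : ZMod n)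
  have hcard : (Finset.Ioo 0 n).card = n - 1 := by simp
  rw [← Nat.forall_div_gcd_iff (by omega),
    show n = r * h + 1 ↔ (Finset.Ioo 0 n).card = r * h by omega, hr',
    Function.card_eq_ncard_orbits_mul_iff (Nat.mapsTo_mul_mod hcop)
      (Nat.orderOf_natCast_pos (by omega) hcop) hper]
  exact forall₂_congr fun x hx => by rw [Nat.minimalPeriod_mul_mod (Finset.mem_Ioo.1 hx).2]

/-- An odd composite `n` coprime to `a` satisfies `n = r_a(n)·h_a(n) + 1`
(overpseudoprime to base `a`), where `r_a(n)` is the number of cyclotomic cosets of `a`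
mod `n` and `h_a(n) = ord_n(a)`, if and only if every divisor `d > 1` of `n` has
`ord_d(a) = ord_n(a)`. -/
theorem overpseudoprime_iff (a n : ℕ) (ha : 1 < a) (hn : 1 < n) (hodd : Odd n)
    (hcomp : ¬ n.Prime) (hcop : Nat.Coprime a n) (r : ℕ)
    (hr : r = Set.ncard {S : Set ℕ | ∃ x, 0 < x ∧ x < n ∧
        S = Set.range (fun k : ℕ => a ^ k * x % n)}) :
    n = r * orderOf (a : ZMod n) + 1 ↔
      ∀ d, d ∣ n → 1 < d → orderOf (a : ZMod d) = orderOf (a : ZMod n) :=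
  overpseudoprime_iff_general a n hn hcop r hr
end

section
/- If n₁ and n₂ are overpseudoprime to base a and h_a(n₁) ≠ h_a(n₂), then gcd(n₁, n₂) = 1. -/
/-- `n` is overpseudoprime to base `a`: `n` is odd, composite, coprime to `a`, and every
divisor `d > 1` of `n` has `ord_d(a) = ord_n(a)`. -/
def Overpseudoprime (a n : ℕ) : Prop :=
  1 < n ∧ Odd n ∧ ¬ n.Prime ∧ Nat.Coprime a n ∧
    ∀ d, d ∣ n → 1 < d → orderOf (a : ZMod d) = orderOf (a : ZMod n)

theorem Overpseudoprime.orderOf_eq_of_dvd {a n d : ℕ} (h : Overpseudoprime a n) (hd : d ∣ n)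
    (hd1 : 1 < d) : orderOf (a : ZMod d) = orderOf (a : ZMod n) :=
  h.2.2.2.2 d hd hd1

theorem overpseudoprime_coprime_general (a n₁ n₂ : ℕ)
    (h1 : Overpseudoprime a n₁) (h2 : Overpseudoprime a n₂)
    (hne : orderOf (a : ZMod n₁) ≠ orderOf (a : ZMod n₂)) :
    Nat.Coprime n₁ n₂ := by
  by_contra hc
  have hg : 1 < Nat.gcd n₁ n₂ :=
    lt_of_le_of_ne (Nat.gcd_pos_of_pos_left _ (zero_lt_one.trans h1.1)) (Ne.symm hc)
  apply hne
  rw [← h1.orderOf_eq_of_dvd (Nat.gcd_dvd_left n₁ n₂) hg,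
    ← h2.orderOf_eq_of_dvd (Nat.gcd_dvd_right n₁ n₂) hg]

/-- Two overpseudoprimes to base `a` with different orders `h_a` are coprime. -/
theorem overpseudoprime_coprime (a n₁ n₂ : ℕ) (ha : 1 < a)
    (h1 : Overpseudoprime a n₁) (h2 : Overpseudoprime a n₂)
    (hne : orderOf (a : ZMod n₁) ≠ orderOf (a : ZMod n₂)) :
    Nat.Coprime n₁ n₂ :=
  overpseudoprime_coprime_general a n₁ n₂ h1 h2 hne
end

section
/- If p is prime, then 2^p − 1 is either prime or overpseudoprime to base 2; i.e., every divisor d > 1 of 2^p − 1 has multiplicative order of 2 modulo d equal to p. -/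
theorem ZMod.natCast_pow_eq_one_of_dvd_pow_sub_one {a n d : ℕ} (ha : 0 < a)
    (h : d ∣ a ^ n - 1) : (a : ZMod d) ^ n = 1 := by
  have hmod : 1 ≡ a ^ n [MOD d] := (Nat.modEq_iff_dvd' (Nat.one_le_pow _ _ ha)).mpr h
  exact_mod_cast ((ZMod.natCast_eq_natCast_iff _ _ _).mpr hmod).symm

theorem ZMod.two_ne_one {d : ℕ} (hd : 1 < d) : (2 : ZMod d) ≠ 1 := by
  intro h
  have h1 : ((1 : ℕ) : ZMod d) = 0 := by push_cast; linear_combination h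
  rw [ZMod.natCast_eq_zero_iff, Nat.dvd_one] at h1
  omega

/-- If `p` is prime, then `2^p - 1` is either prime or overpseudoprime to base 2:
every divisor `d > 1` of `2^p - 1` has multiplicative order of 2 mod `d` equal to `p`. -/
theorem mersenne_primover (p : ℕ) (hp : p.Prime) :
    ∀ d, d ∣ 2 ^ p - 1 → 1 < d → orderOf (2 : ZMod d) = p := by
  intro d hd hd1
  have := Fact.mk hp
  have hpow : ((2 : ℕ) : ZMod d) ^ p = 1 := ZMod.natCast_pow_eq_one_of_dvd_pow_sub_one two_pos hd
  exact orderOf_eq_prime (by exact_mod_cast hpow) (ZMod.two_ne_one hd1)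
end

section
/- For every n ≥ 1, the Fermat number F_n = 2^(2^n) + 1 is primover to base 2: every divisor d > 1 of F_n satisfies ord_d(2) = 2^(n+1). -/
/-!
If `d > 2` divides `a ^ 2 ^ n + 1`, then `a ^ 2 ^ n = -1 ≠ 1` in `ZMod d`, so `a ^ 2 ^ (n + 1) = 1`
and the order of `a` is a power of two that does not divide `2 ^ n`, i.e. exactly `2 ^ (n + 1)`.
A divisor `d > 1` of a Fermat number is odd, hence `d > 2`.
-/

theorem orderOf_eq_two_pow_succ_of_pow_two_pow_eq_neg_one {M : Type*} [Monoid M] [HasDistribNeg M]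
    {x : M} {n : ℕ} (hM : (-1 : M) ≠ 1) (hx : x ^ 2 ^ n = -1) : orderOf x = 2 ^ (n + 1) := by
  have hx_sq : x ^ 2 ^ (n + 1) = 1 := by rw [pow_succ, pow_mul, hx, neg_one_sq]
  exact orderOf_eq_prime_pow (hx ▸ hM) hx_sq

theorem ZMod.natCast_pow_eq_neg_one_of_dvd {a k d : ℕ} (hd : d ∣ a ^ k + 1) :
    (a : ZMod d) ^ k = -1 := by
  rw [eq_neg_iff_add_eq_zero]
  exact_mod_cast (ZMod.natCast_eq_zero_iff _ d).mpr hd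

theorem ZMod.orderOf_natCast_of_dvd_pow_two_pow_add_one {a n d : ℕ} (hd : d ∣ a ^ 2 ^ n + 1)
    (hd2 : 2 < d) : orderOf (a : ZMod d) = 2 ^ (n + 1) :=
  have : Fact (2 < d) := ⟨hd2⟩
  orderOf_eq_two_pow_succ_of_pow_two_pow_eq_neg_one ZMod.neg_one_ne_one
    (ZMod.natCast_pow_eq_neg_one_of_dvd hd)

theorem Nat.two_lt_of_dvd_fermatNumber {n d : ℕ} (hd : d ∣ fermatNumber n) (hd1 : 1 < d) :
    2 < d := by
  have hd_odd : Odd d := (odd_fermatNumber n).of_dvd_nat hd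
  have hd2 : d ≠ 2 := by rintro rfl; exact Nat.not_odd_iff_even.mpr even_two hd_odd
  omega

theorem fermat_primover_general (n : ℕ) :
    ∀ d, d ∣ 2 ^ 2 ^ n + 1 → 1 < d → orderOf (2 : ZMod d) = 2 ^ (n + 1) := by
  intro d hd hd1
  have hd2 : 2 < d := Nat.two_lt_of_dvd_fermatNumber hd hd1
  exact_mod_cast ZMod.orderOf_natCast_of_dvd_pow_two_pow_add_one hd hd2

/-- For `n ≥ 1`, the Fermat number `F_n = 2^(2^n) + 1` is primover to base 2: every
divisor `d > 1` of `F_n` has `ord_d(2) = 2^(n+1)`. -/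
theorem fermat_primover (n : ℕ) (hn : 1 ≤ n) :
    ∀ d, d ∣ 2 ^ 2 ^ n + 1 → 1 < d → orderOf (2 : ZMod d) = 2 ^ (n + 1) :=
  fermat_primover_general n
end

section
/- Let a > 1 and let p < q be primes. Then N = (a−1)(a^(pq) − 1) / ((a^p − 1)(a^q − 1)) is an integer. -/
/-- Since `gcd (a^m - 1) (a^n - 1) = a^(gcd m n) - 1`, this is `gcd * lcm ∣ (a^(gcd m n) - 1) * (a^(mn) - 1)`,
and the `lcm` divides `a^(mn) - 1` because both `a^m - 1` and `a^n - 1` do. -/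
theorem Nat.pow_sub_one_mul_pow_sub_one_dvd (a m n : ℕ) :
    (a ^ m - 1) * (a ^ n - 1) ∣ (a ^ m.gcd n - 1) * (a ^ (m * n) - 1) := by
  have hlcm : (a ^ m - 1).lcm (a ^ n - 1) ∣ a ^ (m * n) - 1 :=
    Nat.lcm_dvd (Nat.pow_sub_one_dvd_pow_sub_one a (dvd_mul_right m n))
      (Nat.pow_sub_one_dvd_pow_sub_one a (dvd_mul_left n m))
  rw [← Nat.gcd_mul_lcm, Nat.pow_sub_one_gcd_pow_sub_one]
  exact mul_dvd_mul_left _ hlcm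

theorem primover_quotient_integer_general (a p q : ℕ) (hp : p.Prime)
    (hq : q.Prime) (hpq : p < q) :
    (a ^ p - 1) * (a ^ q - 1) ∣ (a - 1) * (a ^ (p * q) - 1) := by
  have hcop : p.gcd q = 1 := (Nat.coprime_primes hp hq).mpr hpq.ne
  simpa only [hcop, pow_one] using Nat.pow_sub_one_mul_pow_sub_one_dvd a p q

/-- For `a > 1` and primes `p < q`, `(a^p - 1)(a^q - 1)` divides `(a - 1)(a^(pq) - 1)`,
i.e. `N = (a-1)(a^(pq)-1)/((a^p-1)(a^q-1))` is an integer. -/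
theorem primover_quotient_integer (a p q : ℕ) (ha : 1 < a) (hp : p.Prime)
    (hq : q.Prime) (hpq : p < q) :
    (a ^ p - 1) * (a ^ q - 1) ∣ (a - 1) * (a ^ (p * q) - 1) :=
  primover_quotient_integer_general a p q hp hq hpq
end

section
/- Let a > 1 and p < q be primes, and set N = (a−1)(a^(pq) − 1) / ((a^p − 1)(a^q − 1)). Then N is primover to base a (every divisor d > 1 of N satisfies ord_d(a) = pq) if and only if gcd(N, (a^p − 1)(a^q − 1)) = 1. -/
/-! Since `N ∣ a^(pq) - 1`, the order of `a` modulo any divisor `d` of `N` divides `pq`, and it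
equals `pq` exactly when `d` divides neither `a^p - 1` nor `a^q - 1`. So `N` is primover iff no
divisor `d > 1` of `N` divides `a^p - 1` or `a^q - 1`, i.e. iff `N` is coprime to both. -/

theorem Nat.coprime_iff_forall_one_lt_dvd {m n : ℕ} :
    Nat.Coprime m n ↔ ∀ d, d ∣ m → 1 < d → ¬ d ∣ n := by
  refine ⟨fun h d hdm hd hdn => ?_, fun h => Nat.coprime_of_dvd fun k hk hkm => h k hkm hk.one_lt⟩
  exact hd.ne' (Nat.eq_one_of_dvd_coprimes h hdm hdn)

theorem ZMod.natCast_pow_eq_one_iff_dvd {a e d : ℕ} (ha : 0 < a) :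
    (a : ZMod d) ^ e = 1 ↔ d ∣ a ^ e - 1 := by
  rw [← Nat.cast_pow, ← Nat.cast_one, ZMod.natCast_eq_natCast_iff, Nat.ModEq.comm,
    Nat.modEq_iff_dvd' (Nat.one_le_pow _ _ ha)]

theorem orderOf_eq_mul_primes_iff {G : Type*} [Monoid G] {g : G} {p q : ℕ} (hp : p.Prime)
    (hq : q.Prime) (hg : g ^ (p * q) = 1) : orderOf g = p * q ↔ g ^ p ≠ 1 ∧ g ^ q ≠ 1 := by
  constructor
  · intro h
    refine ⟨fun hgp => ?_, fun hgq => ?_⟩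
    · have : p * q ≤ p := h ▸ orderOf_le_of_pow_eq_one hp.pos hgp
      nlinarith [hp.pos, hq.two_le]
    · have : p * q ≤ q := h ▸ orderOf_le_of_pow_eq_one hq.pos hgq
      nlinarith [hq.pos, hp.two_le]
  · rintro ⟨hgp, hgq⟩
    refine orderOf_eq_of_pow_and_pow_div_prime (Nat.mul_pos hp.pos hq.pos) hg fun r hr hrpq => ?_
    rcases hr.dvd_mul.mp hrpq with hrp | hrq
    · rwa [(Nat.prime_dvd_prime_iff_eq hr hp).mp hrp, Nat.mul_div_cancel_left q hp.pos]
    · rwa [(Nat.prime_dvd_prime_iff_eq hr hq).mp hrq, Nat.mul_div_cancel p hq.pos]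

theorem primover_pq_iff_general (a p q N : ℕ) (ha : 1 < a) (hp : p.Prime) (hq : q.Prime)
    (hN : N * ((a ^ p - 1) * (a ^ q - 1)) = (a - 1) * (a ^ (p * q) - 1)) :
    (∀ d, d ∣ N → 1 < d → orderOf (a : ZMod d) = p * q) ↔
      Nat.Coprime N ((a ^ p - 1) * (a ^ q - 1)) := by
  have hNdvd : N ∣ a ^ (p * q) - 1 := by
    refine Nat.dvd_of_mul_dvd_mul_left (Nat.sub_pos_of_lt ha) ?_
    rw [← hN, mul_comm (a - 1)]
    exact mul_dvd_mul_left N ((Nat.sub_one_dvd_pow_sub_one a p).mul_right _)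
  have hord : ∀ d, d ∣ N →
      (orderOf (a : ZMod d) = p * q ↔ ¬ d ∣ a ^ p - 1 ∧ ¬ d ∣ a ^ q - 1) := fun d hd => by
    have ha0 : 0 < a := by omega
    rw [orderOf_eq_mul_primes_iff hp hq ((ZMod.natCast_pow_eq_one_iff_dvd ha0).2 (hd.trans hNdvd)),
      ne_eq, ne_eq, ZMod.natCast_pow_eq_one_iff_dvd ha0, ZMod.natCast_pow_eq_one_iff_dvd ha0]
  rw [Nat.coprime_mul_iff_right, Nat.coprime_iff_forall_one_lt_dvd,
    Nat.coprime_iff_forall_one_lt_dvd, ← forall_and]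
  refine forall_congr' fun d => ?_
  by_cases hd : d ∣ N
  · simp only [hd, hord d hd, forall_const, imp_and]
  · simp only [hd, false_imp_iff, and_self]

/-- For `a > 1` and primes `p < q`, the integer
`N = (a-1)(a^(pq)-1)/((a^p-1)(a^q-1))` is primover to base `a` (every divisor `d > 1`
of `N` has `ord_d(a) = pq`) iff `gcd(N, (a^p-1)(a^q-1)) = 1`. -/
theorem primover_pq_iff (a p q N : ℕ) (ha : 1 < a) (hp : p.Prime) (hq : q.Prime)
    (hpq : p < q)
    (hN : N * ((a ^ p - 1) * (a ^ q - 1)) = (a - 1) * (a ^ (p * q) - 1)) :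
    (∀ d, d ∣ N → 1 < d → orderOf (a : ZMod d) = p * q) ↔
      Nat.Coprime N ((a ^ p - 1) * (a ^ q - 1)) :=
  primover_pq_iff_general a p q N ha hp hq hN
end

section
/- If N > 1 is overpseudoprime to base 2 (every divisor d > 1 of N has ord_d(2) = ord_N(2)), then N is a Fermat pseudoprime to base 2, i.e., 2^(N−1) ≡ 1 (mod N). -/
/-!
Let `H = ord_N(2)`. Every prime `p ∣ N` is odd, so Fermat's little theorem gives
`ord_p(2) ∣ p - 1`; since `ord_p(2) = H`, every prime factor of `N` is `≡ 1 (mod H)`, hence so is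
`N`, i.e. `H ∣ N - 1`, which is `2^(N-1) ≡ 1 (mod N)`.
-/

theorem Nat.modEq_one_of_forall_prime_dvd {n m : ℕ} (hm : m ≠ 0)
    (h : ∀ p, p.Prime → p ∣ m → p ≡ 1 [MOD n]) : m ≡ 1 [MOD n] := by
  induction m using induction_on_primes with
  | zero => exact absurd rfl hm
  | one => rfl
  | prime_mul p a hp ih =>
    have ha : a ≠ 0 := right_ne_zero_of_mul hm
    calc p * a ≡ 1 * 1 [MOD n] :=
          (h p hp (dvd_mul_right p a)).mul (ih ha fun q hq hqa ↦ h q hq (hqa.mul_left p))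
      _ = 1 := one_mul 1

theorem Nat.Prime.modEq_one_orderOf_of_not_dvd {p a : ℕ} (hp : p.Prime) (hpa : ¬ p ∣ a) :
    p ≡ 1 [MOD orderOf (a : ZMod p)] := by
  have := Fact.mk hp
  have hdvd : orderOf (a : ZMod p) ∣ p - 1 :=
    ZMod.orderOf_dvd_card_sub_one (by rwa [Ne, ZMod.natCast_eq_zero_iff])
  exact ((Nat.modEq_iff_dvd' hp.one_le).2 hdvd).symm

theorem Nat.pow_modEq_one_of_orderOf_dvd {a n k : ℕ} (h : orderOf (a : ZMod n) ∣ k) :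
    a ^ k ≡ 1 [MOD n] := by
  rw [← ZMod.natCast_eq_natCast_iff, Nat.cast_pow, Nat.cast_one]
  exact orderOf_dvd_iff_pow_eq_one.1 h

theorem overpseudoprime_is_fermat_pseudoprime_general (N : ℕ) (hodd : Odd N)
    (h : ∀ d, d ∣ N → 1 < d → orderOf (2 : ZMod d) = orderOf (2 : ZMod N)) :
    2 ^ (N - 1) ≡ 1 [MOD N] := by
  have hprime : ∀ p, p.Prime → p ∣ N → p ≡ 1 [MOD orderOf (2 : ZMod N)] := by
    intro p hp hpN
    have hp2 : ¬ p ∣ 2 := fun h2 ↦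
      hodd.not_two_dvd_nat ((Nat.prime_dvd_prime_iff_eq hp Nat.prime_two).1 h2 ▸ hpN)
    rw [← h p hpN hp.one_lt]
    exact hp.modEq_one_orderOf_of_not_dvd hp2
  have hN : N ≡ 1 [MOD orderOf (2 : ZMod N)] :=
    Nat.modEq_one_of_forall_prime_dvd hodd.pos.ne' hprime
  exact Nat.pow_modEq_one_of_orderOf_dvd ((Nat.modEq_iff_dvd' hodd.pos).1 hN.symm)

/-- If `N` is an odd composite with every divisor `d > 1` of `N` having
`ord_d(2) = ord_N(2)` (overpseudoprime to base 2), then `2^(N-1) ≡ 1 (mod N)`,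
i.e. `N` is a Fermat pseudoprime to base 2. -/
theorem overpseudoprime_is_fermat_pseudoprime (N : ℕ) (hN : 1 < N) (hodd : Odd N)
    (hcomp : ¬ N.Prime)
    (h : ∀ d, d ∣ N → 1 < d → orderOf (2 : ZMod d) = orderOf (2 : ZMod N)) :
    2 ^ (N - 1) ≡ 1 [MOD N] :=
  overpseudoprime_is_fermat_pseudoprime_general N hodd h
end
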